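/- Let k ∈ ℝ³ be nonzero and let h be a trace-free real symmetric 3×3 matrix. Then σ_k(H)(h) = 0 if and only if there exists a vector Y ∈ ℝ³ such that h_{ij} = k_i Y_j + k_j Y_i − (2/3) (Σ_ℓ k_ℓ Y_ℓ) δ_{ij}; that is, the kernel of the symbol of the linearised Cotton operator H on trace-free symmetric matrices equals the image of the symbol of the conformal Killing operator L. -/

import Mathlib

/-!
`σ_k(H) ∘ σ_k(L) = 0`, and on symmetric trace-free `h` there is an explicit homotopy
`4 |k|⁴ h = σ_k(L)(Q h) + ½ k × σ_k(H)(h)` (cross product taken column by column), where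
`Q h = 4 |k|² h k − (kᵀ h k) k` is `sigLInv`. Hence for `k ≠ 0` every `h` in the kernel of
`σ_k(H)` is `σ_k(L)` of `Q h / (4 |k|⁴)`. Once `σ_k(H)` is written through cross products, both
identities are componentwise polynomial identities.
-/

open scoped BigOperators

/-- The Levi-Civita symbol `ε_{ijk}` on three indices. -/
def eps : Fin 3 → Fin 3 → Fin 3 → ℝ := fun i j k =>
  if (i, j, k) = ((0 : Fin 3), (1 : Fin 3), (2 : Fin 3)) ∨
     (i, j, k) = ((1 : Fin 3), (2 : Fin 3), (0 : Fin 3)) ∨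
     (i, j, k) = ((2 : Fin 3), (0 : Fin 3), (1 : Fin 3)) then 1
  else if (i, j, k) = ((2 : Fin 3), (1 : Fin 3), (0 : Fin 3)) ∨
     (i, j, k) = ((1 : Fin 3), (0 : Fin 3), (2 : Fin 3)) ∨
     (i, j, k) = ((0 : Fin 3), (2 : Fin 3), (1 : Fin 3)) then -1
  else 0

/-- The Kronecker delta `δ_{ij}`. -/
def kdelta (i j : Fin 3) : ℝ := if i = j then 1 else 0

/-- The cross product on `ℝ³`: `(a × b)_i = Σ_{j,l} ε_{ijl} a_j b_l`. -/
def cross (a b : Fin 3 → ℝ) : Fin 3 → ℝ := fun i => ∑ j, ∑ l, eps i j l * a j * b l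

/-- The symbol of `rot₂`:
`(σ_k(rot₂)(h))_{ij} = Σ_{ℓ,m} ( ε_{iℓm} k_ℓ h_{mj} + ε_{jℓm} k_ℓ h_{mi} )`. -/
def sigRot2 (k : Fin 3 → ℝ) (h : Fin 3 → Fin 3 → ℝ) : Fin 3 → Fin 3 → ℝ :=
  fun i j => ∑ l, ∑ m, (eps i l m * k l * h m j + eps j l m * k l * h m i)

/-- The symbol of the linearised Cotton operator `H`:
`(σ_k(H)(h))_{ij} = 4( Σ_{n,ℓ,m} k_n k_ℓ ( k_i ε_{jℓm} + k_j ε_{iℓm} ) h_{mn}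
  − |k|² Σ_{ℓ,m} k_ℓ ( ε_{iℓm} h_{mj} + ε_{jℓm} h_{mi} ) )`. -/
def sigH (k : Fin 3 → ℝ) (h : Fin 3 → Fin 3 → ℝ) : Fin 3 → Fin 3 → ℝ :=
  fun i j => 4 * ((∑ n, ∑ l, ∑ m, k n * k l * (k i * eps j l m + k j * eps i l m) * h m n)
    - (∑ l, k l ^ 2) * (∑ l, ∑ m, k l * (eps i l m * h m j + eps j l m * h m i)))


open Matrix

lemma cross_eq_crossProduct (a b : Fin 3 → ℝ) : cross a b = a ⨯₃ b := by
  ext i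
  fin_cases i <;>
    simp only [Fin.zero_eta, Fin.mk_one, Fin.reduceFinMk, Fin.isValue, cross, eps,
      Fin.sum_univ_three, Prod.mk.injEq, Fin.reduceEq, and_true, and_false, true_and, false_and,
      or_false, false_or, or_self, ↓reduceIte, cross_apply, cons_val_zero, cons_val_one, cons_val] <;>
    ring

lemma sigRot2_apply (k : Fin 3 → ℝ) (h : Fin 3 → Fin 3 → ℝ) (i j : Fin 3) :
    sigRot2 k h i j = cross k (fun m => h m j) i + cross k (fun m => h m i) j := by
  simp only [sigRot2, cross, Finset.sum_add_distrib]

lemma sigH_apply (k : Fin 3 → ℝ) (h : Fin 3 → Fin 3 → ℝ) (i j : Fin 3) :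
    sigH k h i j = 4 * (k i * cross k (fun m => ∑ n, h m n * k n) j
      + k j * cross k (fun m => ∑ n, h m n * k n) i - (∑ l, k l ^ 2) * sigRot2 k h i j) := by
  simp only [sigH, sigRot2, cross, Fin.sum_univ_three]
  ring

noncomputable def sigL (k Y : Fin 3 → ℝ) : Fin 3 → Fin 3 → ℝ :=
  fun i j => k i * Y j + k j * Y i - (2/3) * (∑ l, k l * Y l) * kdelta i j

/-- Left inverse of `sigL k` up to the factor `4 |k|⁴`: for `h = sigL k Y` one has
`h k = |k|² Y + (k·Y) k / 3` and `kᵀ h k = 4/3 |k|² (k·Y)`. -/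
def sigLInv (k : Fin 3 → ℝ) (h : Fin 3 → Fin 3 → ℝ) : Fin 3 → ℝ :=
  fun j => 4 * (∑ l, k l ^ 2) * (∑ n, h j n * k n) - (∑ a, ∑ b, k a * h a b * k b) * k j

lemma sigL_smul (k Y : Fin 3 → ℝ) (c : ℝ) (i j : Fin 3) :
    sigL k (c • Y) i j = c * sigL k Y i j := by
  simp only [sigL, Pi.smul_apply, smul_eq_mul, Fin.sum_univ_three]
  ring

lemma sigH_sigL_eq_zero (k Y : Fin 3 → ℝ) : sigH k (sigL k Y) = 0 := by
  ext i j
  simp only [sigH_apply, sigRot2_apply, cross_eq_crossProduct]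
  fin_cases i <;> fin_cases j <;>
    simp only [Fin.zero_eta, Fin.mk_one, Fin.reduceFinMk, Fin.isValue, sigL, kdelta,
      Fin.reduceEq, ↓reduceIte, cross_apply, cons_val_zero, cons_val_one, cons_val,
      Fin.sum_univ_three, Pi.zero_apply] <;> ring

lemma sigL_sigLInv_add_cross_sigH (k : Fin 3 → ℝ) (h : Fin 3 → Fin 3 → ℝ)
    (h_symm : ∀ i j, h i j = h j i) (h_tracefree : ∑ i, h i i = 0) (i j : Fin 3) :
    4 * (∑ l, k l ^ 2) ^ 2 * h i j =
      sigL k (sigLInv k h) i j + (1/2) * cross k (fun m => sigH k h m j) i := by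
  have h10 : h 1 0 = h 0 1 := h_symm 1 0
  have h20 : h 2 0 = h 0 2 := h_symm 2 0
  have h21 : h 2 1 = h 1 2 := h_symm 2 1
  have h22 : h 2 2 = -h 0 0 - h 1 1 := by
    rw [Fin.sum_univ_three] at h_tracefree; linarith
  simp only [sigH_apply, sigRot2_apply, cross_eq_crossProduct]
  fin_cases i <;> fin_cases j <;>
    simp only [Fin.zero_eta, Fin.mk_one, Fin.reduceFinMk, Fin.isValue, sigL, sigLInv, kdelta,
      Fin.reduceEq, ↓reduceIte, cross_apply, cons_val_zero, cons_val_one, cons_val,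
      Fin.sum_univ_three, h10, h20, h21, h22] <;> ring

lemma sum_sq_ne_zero {ι : Type*} [Fintype ι] {k : ι → ℝ} (hk : k ≠ 0) : ∑ l, k l ^ 2 ≠ 0 := by
  simpa only [dotProduct, sq] using dotProduct_self_eq_zero.not.mpr hk

/-- for `k ≠ 0` and trace-free symmetric `h`, `σ_k(H)(h) = 0` iff
`h_{ij} = k_i Y_j + k_j Y_i − (2/3) (Σ_ℓ k_ℓ Y_ℓ) δ_{ij}` for some `Y ∈ ℝ³`; the kernel
of the symbol of `H` on trace-free symmetric matrices equals the image of the symbol of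
the conformal Killing operator `L`. -/
theorem stmt16 (k : Fin 3 → ℝ) (hk : k ≠ 0) (h : Fin 3 → Fin 3 → ℝ)
    (h_symm : ∀ i j, h i j = h j i) (h_tracefree : ∑ i, h i i = 0) :
    (∀ i j, sigH k h i j = 0) ↔
      ∃ Y : Fin 3 → ℝ, ∀ i j,
        h i j = k i * Y j + k j * Y i - (2/3) * (∑ l, k l * Y l) * kdelta i j := by
  have hk_sq := sum_sq_ne_zero hk
  constructor
  · intro hH
    refine ⟨(4 * (∑ l, k l ^ 2) ^ 2)⁻¹ • sigLInv k h, fun i j => ?_⟩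
    have key := sigL_sigLInv_add_cross_sigH k h h_symm h_tracefree i j
    simp only [hH, cross, mul_zero, Finset.sum_const_zero, add_zero] at key
    change h i j = sigL k _ i j
    rw [sigL_smul, ← key]
    field_simp
  · rintro ⟨Y, hY⟩ i j
    obtain rfl : h = sigL k Y := funext₂ hY
    exact congrFun₂ (sigH_sigL_eq_zero k Y) i j
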